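/- arXiv:2301.06112 — 2 statements merged into one kernel-verified Lean document; each statement's English description precedes it below -/
import Mathlib

section
/- Let Δ be an N×N matrix with integer entries and let 0 < ε < 1. Let N_ε be the number of eigenvalues λ of Δ (counted with multiplicity) with 0 < |λ| ≤ ε. Then N_ε / N ≤ log‖Δ‖ / log(ε⁻¹), where ‖Δ‖ denotes the operator norm of Δ (assumed > 1). -/
/-!
The nonzero eigenvalues of `Δ` are the roots of the monic integer polynomial obtained from the
characteristic polynomial by removing its factor `X ^ k`. Their product is, up to sign, the
nonzero constant term of that polynomial, so it has absolute value at least `1`. The eigenvalues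
with `|λ| ≤ ε` contribute at most `ε ^ N_ε` to this product and the others, at most `N` of them,
each at most `‖Δ‖ > 1`; hence `1 ≤ ε ^ N_ε * ‖Δ‖ ^ N`, and the claim follows by taking
logarithms.
-/

open Polynomial

namespace Polynomial

theorem one_le_prod_norm_roots_map_complex_of_monic {q : ℤ[X]} (hq : q.Monic)
    (h0 : q.coeff 0 ≠ 0) : 1 ≤ ((q.map (Int.castRingHom ℂ)).roots.map (‖·‖)).prod := by
  have hcoeff :=
    (IsAlgClosed.splits (q.map (Int.castRingHom ℂ))).coeff_zero_eq_prod_roots_of_monic (hq.map _)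
  calc (1 : ℝ) ≤ |(q.coeff 0 : ℝ)| := mod_cast Int.one_le_abs h0
    _ = ‖(q.map (Int.castRingHom ℂ)).coeff 0‖ := by simp
    _ = ((q.map (Int.castRingHom ℂ)).roots.map (‖·‖)).prod := by
      rw [hcoeff, norm_mul, norm_pow, norm_neg, norm_one, one_pow, one_mul]
      exact map_multiset_prod (normHom : ℂ →*₀ ℝ) _

theorem roots_X_pow_mul_filter_ne_zero {R : Type*} [CommRing R] [IsDomain R] [DecidableEq R]
    (k : ℕ) {q : R[X]} (hq : q ≠ 0) (h0 : q.coeff 0 ≠ 0) :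
    (X ^ k * q).roots.filter (· ≠ 0) = q.roots := by
  rw [roots_mul (mul_ne_zero (pow_ne_zero k X_ne_zero) hq), roots_X_pow, Multiset.filter_add,
    Multiset.filter_eq_nil.2 (by simp), Multiset.filter_eq_self.2 ?_, zero_add]
  rintro x hx rfl
  rw [coeff_zero_eq_eval_zero] at h0
  exact h0 (isRoot_of_mem_roots hx)

theorem one_le_prod_norm_nonzero_roots_map_complex_of_monic {p : ℤ[X]} (hp : p.Monic) :
    1 ≤ (((p.map (Int.castRingHom ℂ)).roots.filter (· ≠ 0)).map (‖·‖)).prod := by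
  obtain ⟨q, hpq, hX⟩ := p.exists_eq_pow_rootMultiplicity_mul_and_not_dvd hp.ne_zero 0
  rw [map_zero, sub_zero] at hpq hX
  have hq : q.Monic := (monic_X_pow _).of_mul_monic_left (hpq ▸ hp)
  have h0 : q.coeff 0 ≠ 0 := mt X_dvd_iff.2 hX
  rw [hpq, Polynomial.map_mul, Polynomial.map_pow, map_X,
    roots_X_pow_mul_filter_ne_zero _ (hq.map _).ne_zero (by simpa using h0)]
  exact one_le_prod_norm_roots_map_complex_of_monic hq h0

end Polynomial

theorem Multiset.card_filter_mul_log_inv_le {α : Type*} (s : Multiset α) (f : α → ℝ) {ε T : ℝ}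
    (hε : 0 < ε) (hT : 1 ≤ T) (hf0 : ∀ x ∈ s, 0 ≤ f x) (hfT : ∀ x ∈ s, f x ≤ T)
    (hprod : 1 ≤ (s.map f).prod) :
    (card (s.filter (f · ≤ ε)) : ℝ) * Real.log ε⁻¹ ≤ card s * Real.log T := by
  classical
  set small := s.filter (f · ≤ ε)
  set large := s.filter (fun x => ¬ f x ≤ ε)
  have prod_le_pow {t : Multiset α} {c : ℝ} (hts : t ≤ s) (hc : ∀ x ∈ t, f x ≤ c) :
      (t.map f).prod ≤ c ^ card t := by
    simpa using prod_map_le_prod_map₀ f (fun _ => c) (fun x hx => hf0 x (mem_of_le hts hx)) hc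
  have hlarge : card large ≤ card s := card_le_card (filter_le _ _)
  have key : 1 ≤ ε ^ card small * T ^ card s :=
    calc (1 : ℝ) ≤ (s.map f).prod := hprod
      _ = (small.map f).prod * (large.map f).prod := by
        rw [← prod_add, ← map_add, filter_add_not]
      _ ≤ ε ^ card small * T ^ card large := by
        gcongr
        · exact prod_map_nonneg fun x hx => hf0 x (mem_of_mem_filter hx)
        · exact prod_le_pow (filter_le _ _) fun x hx => (mem_filter.1 hx).2
        · exact prod_le_pow (filter_le _ _) fun x hx => hfT x (mem_of_mem_filter hx)
      _ ≤ ε ^ card small * T ^ card s := by gcongr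
  have := Real.log_nonneg key
  rw [Real.log_mul (by positivity) (by positivity), Real.log_pow, Real.log_pow] at this
  rw [Real.log_inv]
  linarith

theorem Matrix.norm_le_norm_toEuclideanCLM_of_mem_roots {𝕜 n : Type*} [RCLike 𝕜] [Fintype n]
    [DecidableEq n] [Nonempty n] (A : Matrix n n 𝕜) {μ : 𝕜} (hμ : μ ∈ A.charpoly.roots) :
    ‖μ‖ ≤ ‖toEuclideanCLM (𝕜 := 𝕜) A‖ := by
  refine spectrum.norm_le_norm_of_mem ?_
  rw [AlgEquiv.spectrum_eq]
  exact mem_spectrum_of_isRoot_charpoly (isRoot_of_mem_roots hμ)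

/-- Let `Δ` be an `N × N` integer matrix and `0 < ε < 1`.  If `N_ε` denotes the number of
complex eigenvalues `λ` of `Δ` (counted with algebraic multiplicity, i.e. as roots of the
characteristic polynomial over `ℂ`) with `0 < |λ| ≤ ε`, and the operator (spectral) norm
`‖Δ‖` is `> 1`, then `N_ε / N ≤ log ‖Δ‖ / log (ε⁻¹)`. -/
theorem stmt0 (N : ℕ) (Δ : Matrix (Fin N) (Fin N) ℤ) (ε : ℝ) (hε0 : 0 < ε) (hε1 : ε < 1)
    (hnorm : 1 < ‖Matrix.toEuclideanCLM (𝕜 := ℂ) (Δ.map (fun a => (a : ℂ)))‖) :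
    (Multiset.card
        ((Δ.map (fun a => (a : ℂ))).charpoly.roots.filter
          (fun lam => 0 < ‖lam‖ ∧ ‖lam‖ ≤ ε)) : ℝ) / (N : ℝ) ≤
      Real.log ‖Matrix.toEuclideanCLM (𝕜 := ℂ) (Δ.map (fun a => (a : ℂ)))‖ /
        Real.log ε⁻¹ := by
  set M := Δ.map (fun a => (a : ℂ))
  have hlogT : 0 < Real.log ‖Matrix.toEuclideanCLM (𝕜 := ℂ) M‖ := Real.log_pos hnorm
  have hlogε : 0 < Real.log ε⁻¹ := Real.log_pos ((one_lt_inv₀ hε0).2 hε1)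
  rcases N.eq_zero_or_pos with rfl | hN
  · rw [Nat.cast_zero, div_zero]
    positivity
  have : Nonempty (Fin N) := ⟨⟨0, hN⟩⟩
  have hM : M.charpoly = Δ.charpoly.map (Int.castRingHom ℂ) := Δ.charpoly_map (Int.castRingHom ℂ)
  have hcount := Multiset.card_filter_mul_log_inv_le (M.charpoly.roots.filter (· ≠ 0)) (‖·‖) hε0
    hnorm.le (fun _ _ => norm_nonneg _)
    (fun μ hμ => M.norm_le_norm_toEuclideanCLM_of_mem_roots (Multiset.mem_of_mem_filter hμ))
    (hM ▸ one_le_prod_norm_nonzero_roots_map_complex_of_monic Δ.charpoly_monic)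
  have hcard : Multiset.card (M.charpoly.roots.filter (· ≠ 0)) ≤ N :=
    calc _ ≤ Multiset.card M.charpoly.roots := Multiset.card_le_card (Multiset.filter_le _ _)
      _ ≤ M.charpoly.natDegree := card_roots' _
      _ = N := by rw [Matrix.charpoly_natDegree_eq_dim, Fintype.card_fin]
  rw [Multiset.filter_filter] at hcount
  simp only [norm_pos_iff, and_comm] at hcount ⊢
  rw [div_le_div_iff₀ (by positivity) hlogε]
  calc _ ≤ _ := hcount
    _ ≤ (N : ℝ) * _ := by gcongr
    _ = _ := mul_comm _ _
end

section
/- Let G be a graph product of groups over a finite flag complex (equivalently, a finite simplicial graph) with vertex groups {G_s}, and for each vertex s let H_s ≤ G_s be a subgroup. Then the graph product H of the groups {H_s} over the same graph embeds as a subgroup of G via the natural map. -/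
open Monoid
open scoped commutatorElement

/-- The graph product of a family of groups `G i` over a (simple) graph `Γ`: the quotient
of the free product by the relations `⁅g, g'⁆ = 1` for `g ∈ G i`, `g' ∈ G j` with `i, j`
adjacent in `Γ`. -/
def GraphProduct {ι : Type*} (Γ : SimpleGraph ι) (G : ι → Type*) [∀ i, Group (G i)] :=
  CoprodI G ⧸ Subgroup.normalClosure
    {x : CoprodI G | ∃ (i j : ι) (a : G i) (b : G j), Γ.Adj i j ∧
      x = ⁅CoprodI.of a, CoprodI.of b⁆}

instance {ι : Type*} (Γ : SimpleGraph ι) (G : ι → Type*) [∀ i, Group (G i)] :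
    Group (GraphProduct Γ G) := by
  delta GraphProduct; infer_instance

/-- The canonical map from a vertex group to the graph product. -/
def GraphProduct.of {ι : Type*} (Γ : SimpleGraph ι) (G : ι → Type*) [∀ i, Group (G i)]
    (i : ι) : G i →* GraphProduct Γ G :=
  (QuotientGroup.mk' _).comp CoprodI.of

/-!
Green's normal form argument. Left multiplication by a letter `x ∈ G i` acts on reduced words:
`x` is merged into the first `i`-letter that can be shuffled to the front of the word, or
prepended if there is none. Up to shuffling adjacent letters, this respects multiplication in
`G i`, and the actions of adjacent vertex groups commute; so the graph product acts on shuffle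
classes of reduced words, and the product of a reduced word `w` sends the empty word to the
class of `w`. Hence a nonempty reduced word has nontrivial product. Injective maps of the vertex
groups send reduced words to reduced words, so the induced map of graph products is injective.
-/

theorem List.append_cons_eq_append_cons {α : Type*} {a b c d : List α} {x y : α}
    (h : a ++ x :: b = c ++ y :: d) :
    (∃ t, c = a ++ x :: t ∧ b = t ++ y :: d) ∨ (a = c ∧ x = y ∧ b = d) ∨
      (∃ t, a = c ++ y :: t ∧ d = t ++ x :: b) := by
  rcases List.append_eq_append_iff.1 h with ⟨s, rfl, hs⟩ | ⟨s, rfl, hs⟩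
  · rcases List.cons_eq_append_iff.1 hs with ⟨rfl, hyd⟩ | ⟨t, rfl, rfl⟩
    · obtain ⟨rfl, rfl⟩ := List.cons.inj hyd
      exact Or.inr (Or.inl ⟨by simp, rfl, rfl⟩)
    · exact Or.inl ⟨t, rfl, rfl⟩
  · rcases List.cons_eq_append_iff.1 hs with ⟨rfl, hxb⟩ | ⟨t, rfl, rfl⟩
    · obtain ⟨rfl, rfl⟩ := List.cons.inj hxb
      exact Or.inr (Or.inl ⟨by simp, rfl, rfl⟩)
    · exact Or.inr (Or.inr ⟨t, rfl, rfl⟩)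

namespace GraphProduct

section VertexLists

variable {ι : Type*} (Γ : SimpleGraph ι)

/-- Some occurrence of `i` in `V` is preceded only by neighbours of `i`, so that it can be
shuffled to the front. -/
def Leads (i : ι) : List ι → Prop
  | [] => False
  | k :: V => k = i ∨ (Γ.Adj i k ∧ Leads i V)

/-- Two occurrences of some vertex `i` in `V` are separated only by neighbours of `i`, so that
they can be shuffled next to each other. -/
def Mergeable : List ι → Prop
  | [] => False
  | k :: V => Leads Γ k V ∨ Mergeable V

variable {Γ}

@[simp] theorem leads_nil (i : ι) : ¬ Leads Γ i [] := id

@[simp] theorem leads_cons {i k : ι} {V : List ι} :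
    Leads Γ i (k :: V) ↔ k = i ∨ (Γ.Adj i k ∧ Leads Γ i V) := Iff.rfl

@[simp] theorem mergeable_nil : ¬ Mergeable Γ [] := id

@[simp] theorem mergeable_cons {k : ι} {V : List ι} :
    Mergeable Γ (k :: V) ↔ Leads Γ k V ∨ Mergeable Γ V := Iff.rfl

theorem leads_append_cons {i : ι} {A : List ι} (hA : ∀ j ∈ A, Γ.Adj i j) (B : List ι) :
    Leads Γ i (A ++ i :: B) := by
  induction A with
  | nil => simp
  | cons k A ih => simp_all

theorem Leads.insert {i j : ι} {A B : List ι} (hij : Γ.Adj i j) (h : Leads Γ i (A ++ B)) :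
    Leads Γ i (A ++ j :: B) := by
  induction A with
  | nil => exact Or.inr ⟨hij, h⟩
  | cons k A ih => exact h.imp_right (And.imp_right ih)

theorem Mergeable.insert {j : ι} {A B : List ι} (hA : ∀ k ∈ A, Γ.Adj j k)
    (h : Mergeable Γ (A ++ B)) : Mergeable Γ (A ++ j :: B) := by
  induction A with
  | nil => exact Or.inr h
  | cons k A ih =>
    simp only [List.mem_cons, forall_eq_or_imp] at hA
    exact h.imp (Leads.insert hA.1.symm) (ih hA.2)

theorem Leads.mergeable_insert {i : ι} {A B : List ι} (hA : ∀ k ∈ A, Γ.Adj i k)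
    (h : Leads Γ i (A ++ B)) : Mergeable Γ (A ++ i :: B) := by
  induction A with
  | nil => exact Or.inl h
  | cons k A ih =>
    simp only [List.mem_cons, forall_eq_or_imp] at hA
    rcases h with rfl | ⟨-, h⟩
    · exact absurd hA.1 (Γ.loopless.irrefl k)
    · exact Or.inr (ih hA.2 h)

end VertexLists

section Words

open Relation

variable {ι : Type*} (Γ : SimpleGraph ι) {G : ι → Type*}

variable (G) in
abbrev Word := List ((i : ι) × G i)

namespace Word

def vertices (w : Word G) : List ι := w.map Sigma.fst

@[simp] theorem vertices_nil : vertices ([] : Word G) = [] := rfl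

@[simp] theorem vertices_cons (l : (i : ι) × G i) (w : Word G) :
    vertices (l :: w) = l.1 :: vertices w := rfl

@[simp] theorem vertices_append (a b : Word G) : vertices (a ++ b) = vertices a ++ vertices b :=
  List.map_append

theorem forall_mem_vertices {p : ι → Prop} {w : Word G} :
    (∀ j ∈ w.vertices, p j) ↔ ∀ l ∈ w, p l.1 :=
  List.forall_mem_map

inductive Shuffle : Word G → Word G → Prop
  | swap (p q : Word G) (l₁ l₂ : (i : ι) × G i) (h : Γ.Adj l₁.1 l₂.1) :
      Shuffle (p ++ l₁ :: l₂ :: q) (p ++ l₂ :: l₁ :: q)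

variable {Γ}

theorem Shuffle.symm {w w' : Word G} (h : Shuffle Γ w w') : Shuffle Γ w' w := by
  obtain ⟨p, q, l₁, l₂, h⟩ := h
  exact .swap p q l₂ l₁ h.symm

theorem Shuffle.append_left {w w' : Word G} (h : Shuffle Γ w w') (c : Word G) :
    Shuffle Γ (c ++ w) (c ++ w') := by
  obtain ⟨p, q, l₁, l₂, h⟩ := h
  simpa using Shuffle.swap (c ++ p) q l₁ l₂ h

theorem Shuffle.length_eq {w w' : Word G} (h : Shuffle Γ w w') : w.length = w'.length := by
  obtain ⟨p, q, l₁, l₂, -⟩ := h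
  simp

theorem length_eq_of_eqvGen_shuffle {w w' : Word G} (h : EqvGen (Shuffle Γ) w w') :
    w.length = w'.length := by
  induction h with
  | rel _ _ h => exact h.length_eq
  | refl => rfl
  | symm _ _ _ ih => exact ih.symm
  | trans _ _ _ _ _ ih₁ ih₂ => exact ih₁.trans ih₂

theorem eqvGen_shuffle_move {i : ι} (x : G i) {a : Word G} (ha : ∀ l ∈ a, Γ.Adj i l.1)
    (p b : Word G) : EqvGen (Shuffle Γ) (p ++ ⟨i, x⟩ :: (a ++ b)) (p ++ a ++ ⟨i, x⟩ :: b) := by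
  induction a generalizing p with
  | nil => simpa using EqvGen.refl _
  | cons l a ih =>
    simp only [List.mem_cons, forall_eq_or_imp] at ha
    refine .trans _ _ _ (.rel _ _ (Shuffle.swap p (a ++ b) ⟨i, x⟩ l ha.1)) ?_
    simpa using ih ha.2 (p ++ [l])

theorem leads_vertices_append_cons {i : ι} {a : Word G} (ha : ∀ l ∈ a, Γ.Adj i l.1) (g : G i)
    (b : Word G) : Leads Γ i (a ++ ⟨i, g⟩ :: b).vertices := by
  simpa using leads_append_cons (forall_mem_vertices.2 ha) b.vertices

theorem exists_eq_append_cons_of_leads {i : ι} {w : Word G} (h : Leads Γ i w.vertices) :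
    ∃ a g b, w = a ++ ⟨i, g⟩ :: b ∧ ∀ l ∈ a, Γ.Adj i l.1 := by
  induction w with
  | nil => exact absurd h (leads_nil i)
  | cons l w ih =>
    obtain ⟨k, y⟩ := l
    rcases h with rfl | ⟨hik, h⟩
    · exact ⟨[], y, w, rfl, by simp⟩
    · obtain ⟨a, g, b, rfl, ha⟩ := ih h
      exact ⟨⟨k, y⟩ :: a, g, b, rfl, by simpa [hik] using ha⟩

theorem eq_of_append_cons_eq {i : ι} {a a' b b' : Word G} {g g' : G i}
    (ha : ∀ l ∈ a, Γ.Adj i l.1) (ha' : ∀ l ∈ a', Γ.Adj i l.1)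
    (h : a ++ ⟨i, g⟩ :: b = a' ++ ⟨i, g'⟩ :: b') : a = a' ∧ g = g' ∧ b = b' := by
  rcases List.append_cons_eq_append_cons h with ⟨t, rfl, -⟩ | ⟨rfl, hg, rfl⟩ | ⟨t, rfl, -⟩
  · exact absurd (ha' ⟨i, g⟩ (by simp)) (Γ.loopless.irrefl i)
  · exact ⟨rfl, eq_of_heq (Sigma.mk.inj hg).2, rfl⟩
  · exact absurd (ha ⟨i, g'⟩ (by simp)) (Γ.loopless.irrefl i)

end Word

end Words

section Letters

open Relation
open scoped Classical

variable {ι : Type*} {Γ : SimpleGraph ι} {G : ι → Type*} [∀ i, Group (G i)]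

namespace Word

variable (Γ) in
def Reduced (w : Word G) : Prop := (∀ l ∈ w, l.2 ≠ 1) ∧ ¬ Mergeable Γ w.vertices

noncomputable def splice (a : Word G) {i : ι} (z : G i) (b : Word G) : Word G :=
  if z = 1 then a ++ b else a ++ ⟨i, z⟩ :: b

@[simp] theorem splice_one (a b : Word G) (i : ι) : splice a (1 : G i) b = a ++ b := if_pos rfl

theorem splice_of_ne_one (a b : Word G) {i : ι} {z : G i} (hz : z ≠ 1) :
    splice a z b = a ++ ⟨i, z⟩ :: b := if_neg hz

theorem append_splice (c a b : Word G) {i : ι} (z : G i) :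
    c ++ splice a z b = splice (c ++ a) z b := by
  unfold splice; split_ifs <;> simp

theorem cons_splice (l : (i : ι) × G i) (a b : Word G) {i : ι} (z : G i) :
    l :: splice a z b = splice (l :: a) z b := by
  unfold splice; split_ifs <;> simp

theorem splice_append (a b c : Word G) {i : ι} (z : G i) :
    splice a z b ++ c = splice a z (b ++ c) := by
  unfold splice; split_ifs <;> simp

theorem splice_splice (a t d : Word G) {i j : ι} (z : G i) (z' : G j) :
    splice a z (splice t z' d) = splice (splice a z t) z' d := by
  unfold splice; split_ifs <;> simp

theorem mem_splice {a b : Word G} {i : ι} {z : G i} {l : (i : ι) × G i} (h : l ∈ splice a z b) :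
    l ∈ a ∨ (l = ⟨i, z⟩ ∧ z ≠ 1) ∨ l ∈ b := by
  unfold splice at h; split_ifs at h with hz <;> simp at h <;> tauto

theorem leads_of_leads_splice {i j : ι} (hji : Γ.Adj j i) {a b : Word G} (z g : G i)
    (h : Leads Γ j (splice a z b).vertices) : Leads Γ j (a ++ ⟨i, g⟩ :: b).vertices := by
  unfold splice at h; split_ifs at h
  · simpa using (show Leads Γ j (a.vertices ++ b.vertices) by simpa using h).insert hji
  · simpa using h

variable (Γ) in
noncomputable def mulLetter (i : ι) (x : G i) (w : Word G) : Word G :=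
  if h : ∃ s : Word G × G i × Word G, w = s.1 ++ ⟨i, s.2.1⟩ :: s.2.2 ∧ ∀ l ∈ s.1, Γ.Adj i l.1
  then splice h.choose.1 (x * h.choose.2.1) h.choose.2.2
  else splice [] x w

theorem mulLetter_append_cons {i : ι} (x : G i) {a : Word G} (ha : ∀ l ∈ a, Γ.Adj i l.1)
    (g : G i) (b : Word G) : mulLetter Γ i x (a ++ ⟨i, g⟩ :: b) = splice a (x * g) b := by
  have h : ∃ s : Word G × G i × Word G,
      a ++ ⟨i, g⟩ :: b = s.1 ++ ⟨i, s.2.1⟩ :: s.2.2 ∧ ∀ l ∈ s.1, Γ.Adj i l.1 :=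
    ⟨(a, g, b), rfl, ha⟩
  obtain ⟨hw, ha'⟩ := h.choose_spec
  obtain ⟨h₁, h₂, h₃⟩ := eq_of_append_cons_eq ha ha' hw
  rw [mulLetter, dif_pos h, ← h₁, ← h₂, ← h₃]

theorem mulLetter_of_not_leads {i : ι} (x : G i) {w : Word G} (h : ¬ Leads Γ i w.vertices) :
    mulLetter Γ i x w = splice [] x w := by
  refine dif_neg ?_
  rintro ⟨⟨a, g, b⟩, rfl, ha⟩
  exact h (leads_vertices_append_cons ha g b)

theorem Reduced.of_cons {l : (i : ι) × G i} {w : Word G} (h : Reduced Γ (l :: w)) :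
    Reduced Γ w :=
  ⟨fun m hm => h.1 m (List.mem_cons_of_mem l hm), fun hm => h.2 (Or.inr hm)⟩

theorem Reduced.not_leads_of_cons {i : ι} {g : G i} {w : Word G}
    (h : Reduced Γ (⟨i, g⟩ :: w)) : ¬ Leads Γ i w.vertices :=
  fun hl => h.2 (Or.inl hl)

theorem Reduced.not_leads_delete {i : ι} {a b : Word G} {g : G i}
    (hw : Reduced Γ (a ++ ⟨i, g⟩ :: b)) (ha : ∀ l ∈ a, Γ.Adj i l.1) :
    ¬ Leads Γ i (a ++ b).vertices := by
  intro h
  refine hw.2 ?_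
  simpa using (show Leads Γ i (a.vertices ++ b.vertices) by simpa using h).mergeable_insert
    (forall_mem_vertices.2 ha)

theorem reduced_splice {i : ι} {a b : Word G} {g : G i} (hw : Reduced Γ (a ++ ⟨i, g⟩ :: b))
    (ha : ∀ l ∈ a, Γ.Adj i l.1) (z : G i) : Reduced Γ (splice a z b) := by
  refine ⟨fun l hl => ?_, ?_⟩
  · rcases mem_splice hl with hl | ⟨rfl, hz⟩ | hl
    · exact hw.1 l (by simp [hl])
    · exact hz
    · exact hw.1 l (by simp [hl])
  · have hm : ¬ Mergeable Γ (a.vertices ++ i :: b.vertices) := by simpa using hw.2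
    unfold Word.splice
    split_ifs
    · intro h
      exact hm ((show Mergeable Γ (a.vertices ++ b.vertices) by simpa using h).insert
        (forall_mem_vertices.2 ha))
    · simpa using hm

theorem reduced_splice_nil {i : ι} {w : Word G} (hw : Reduced Γ w) (h : ¬ Leads Γ i w.vertices)
    (z : G i) : Reduced Γ (splice [] z w) := by
  unfold Word.splice
  split_ifs with hz
  · exact hw
  · refine ⟨?_, ?_⟩
    · simpa using ⟨hz, hw.1⟩
    · simpa using ⟨h, hw.2⟩

theorem reduced_mulLetter {w : Word G} (hw : Reduced Γ w) (i : ι) (x : G i) :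
    Reduced Γ (mulLetter Γ i x w) := by
  by_cases h : Leads Γ i w.vertices
  · obtain ⟨a, g, b, rfl, ha⟩ := exists_eq_append_cons_of_leads h
    rw [mulLetter_append_cons x ha]
    exact reduced_splice hw ha _
  · rw [mulLetter_of_not_leads x h]
    exact reduced_splice_nil hw h x

theorem mulLetter_one {w : Word G} (hw : Reduced Γ w) (i : ι) : mulLetter Γ i 1 w = w := by
  by_cases h : Leads Γ i w.vertices
  · obtain ⟨a, g, b, rfl, ha⟩ := exists_eq_append_cons_of_leads h
    rw [mulLetter_append_cons 1 ha, one_mul, splice_of_ne_one _ _ (hw.1 ⟨i, g⟩ (by simp))]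
  · rw [mulLetter_of_not_leads 1 h, splice_one, List.nil_append]

theorem Shuffle.exists_append_cons {w w' : Word G} (hs : Shuffle Γ w w') {i : ι} {a b : Word G}
    {g : G i} (hw : w = a ++ ⟨i, g⟩ :: b) (ha : ∀ l ∈ a, Γ.Adj i l.1) :
    ∃ a' b', w' = a' ++ ⟨i, g⟩ :: b' ∧ (∀ l ∈ a', Γ.Adj i l.1) ∧
      ∀ z : G i, EqvGen (Shuffle Γ) (splice a z b) (splice a' z b') := by
  obtain ⟨p, q, l₁, l₂, hl⟩ := hs
  -- the swapped pair lies after the `i`-letter, starts at it, or ends at it or before it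
  rcases List.append_cons_eq_append_cons hw.symm with ⟨t, rfl, rfl⟩ | ⟨rfl, rfl, rfl⟩ |
    ⟨t, rfl, ht⟩
  · refine ⟨a, t ++ l₂ :: l₁ :: q, by simp, ha, fun z => .rel _ _ ?_⟩
    by_cases hz : z = 1
    · simpa [hz] using Shuffle.swap (a ++ t) q l₁ l₂ hl
    · simpa [splice_of_ne_one _ _ hz] using Shuffle.swap (a ++ ⟨i, z⟩ :: t) q l₁ l₂ hl
  · refine ⟨a ++ [l₂], q, by simp,
      fun l hl' => (List.mem_append.1 hl').elim (ha l) (by simp_all), fun z => ?_⟩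
    by_cases hz : z = 1
    · simpa [hz] using EqvGen.refl _
    · exact .rel _ _ (by simpa [splice_of_ne_one _ _ hz] using Shuffle.swap a q ⟨i, z⟩ l₂ hl)
  · have hl₁ : Γ.Adj l₁.1 i := (ha l₁ (by simp)).symm
    rcases t with _ | ⟨m, t⟩
    · obtain ⟨rfl, rfl⟩ := List.cons.inj ht
      refine ⟨p, l₁ :: q, rfl, fun l hl => ha l (by simp [hl]), fun z => ?_⟩
      by_cases hz : z = 1
      · simpa [hz] using EqvGen.refl _
      · exact .rel _ _ (by simpa [splice_of_ne_one _ _ hz] using Shuffle.swap p q l₁ ⟨i, z⟩ hl₁)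
    · obtain ⟨rfl, rfl⟩ := List.cons.inj ht
      refine ⟨p ++ l₂ :: l₁ :: t, b, by simp, fun l hl => ha l ?_, fun z => .rel _ _ ?_⟩
      · simp only [List.mem_append, List.mem_cons] at hl ⊢
        tauto
      · by_cases hz : z = 1
        · simpa [hz] using Shuffle.swap p (t ++ b) l₁ l₂ hl
        · simpa [splice_of_ne_one _ _ hz] using Shuffle.swap p (t ++ ⟨i, z⟩ :: b) l₁ l₂ hl

theorem Shuffle.leads_vertices_iff {w w' : Word G} (hs : Shuffle Γ w w') {i : ι} :
    Leads Γ i w.vertices ↔ Leads Γ i w'.vertices := by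
  suffices ∀ {w w' : Word G}, Shuffle Γ w w' → Leads Γ i w.vertices → Leads Γ i w'.vertices from
    ⟨this hs, this hs.symm⟩
  intro w w' hs h
  obtain ⟨a, g, b, rfl, ha⟩ := exists_eq_append_cons_of_leads h
  obtain ⟨a', b', rfl, ha', -⟩ := hs.exists_append_cons rfl ha
  exact leads_vertices_append_cons ha' g b'

theorem Shuffle.eqvGen_mulLetter {w w' : Word G} (hs : Shuffle Γ w w') (i : ι) (x : G i) :
    EqvGen (Shuffle Γ) (mulLetter Γ i x w) (mulLetter Γ i x w') := by
  by_cases h : Leads Γ i w.vertices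
  · obtain ⟨a, g, b, rfl, ha⟩ := exists_eq_append_cons_of_leads h
    obtain ⟨a', b', rfl, ha', hab⟩ := hs.exists_append_cons rfl ha
    rw [mulLetter_append_cons x ha, mulLetter_append_cons x ha']
    exact hab _
  · rw [mulLetter_of_not_leads x h, mulLetter_of_not_leads x (hs.leads_vertices_iff.not.1 h)]
    have h' := hs.append_left (splice [] x [])
    simp only [splice_append, List.nil_append] at h'
    exact .rel _ _ h'

theorem mulLetter_eqvGen {w w' : Word G} (h : EqvGen (Shuffle Γ) w w') (i : ι) (x : G i) :
    EqvGen (Shuffle Γ) (mulLetter Γ i x w) (mulLetter Γ i x w') := by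
  induction h with
  | rel _ _ h => exact h.eqvGen_mulLetter i x
  | refl => exact .refl _
  | symm _ _ _ ih => exact .symm _ _ ih
  | trans _ _ _ _ _ ih₁ ih₂ => exact .trans _ _ _ ih₁ ih₂

theorem eqvGen_splice_nil_append {i : ι} (z : G i) {a : Word G} (ha : ∀ l ∈ a, Γ.Adj i l.1)
    (b : Word G) : EqvGen (Shuffle Γ) (splice [] z (a ++ b)) (splice a z b) := by
  by_cases hz : z = 1
  · simpa [hz] using EqvGen.refl _
  · simpa [splice_of_ne_one _ _ hz] using eqvGen_shuffle_move z ha [] b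

theorem mulLetter_mul {w : Word G} (hw : Reduced Γ w) (i : ι) (x y : G i) :
    EqvGen (Shuffle Γ) (mulLetter Γ i x (mulLetter Γ i y w)) (mulLetter Γ i (x * y) w) := by
  by_cases h : Leads Γ i w.vertices
  · obtain ⟨a, g, b, rfl, ha⟩ := exists_eq_append_cons_of_leads h
    rw [mulLetter_append_cons y ha, mulLetter_append_cons (x * y) ha, mul_assoc]
    by_cases hyg : y * g = 1
    · rw [hyg, splice_one, mulLetter_of_not_leads x (hw.not_leads_delete ha), mul_one]
      exact eqvGen_splice_nil_append x ha b
    · rw [splice_of_ne_one _ _ hyg, mulLetter_append_cons x ha]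
      exact .refl _
  · rw [mulLetter_of_not_leads y h, mulLetter_of_not_leads (x * y) h]
    by_cases hy : y = 1
    · rw [hy, splice_one, List.nil_append, mulLetter_of_not_leads x h, mul_one]
      exact .refl _
    · rw [splice_of_ne_one _ _ hy, mulLetter_append_cons (a := []) x (by simp)]
      exact .refl _

theorem mulLetter_comm_of_append_cons {i j : ι} (hij : Γ.Adj i j) (x : G i) (y : G j)
    {a t d : Word G} (g : G i) (h : G j) (ha : ∀ l ∈ a, Γ.Adj i l.1)
    (hat : ∀ l ∈ a ++ ⟨i, g⟩ :: t, Γ.Adj j l.1) :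
    mulLetter Γ i x (mulLetter Γ j y (a ++ ⟨i, g⟩ :: (t ++ ⟨j, h⟩ :: d))) =
      mulLetter Γ j y (mulLetter Γ i x (a ++ ⟨i, g⟩ :: (t ++ ⟨j, h⟩ :: d))) := by
  have hj : ∀ l ∈ splice a (x * g) t, Γ.Adj j l.1 := fun l hl => by
    rcases mem_splice hl with hl | ⟨rfl, -⟩ | hl
    · exact hat l (by simp [hl])
    · exact hij.symm
    · exact hat l (by simp [hl])
  have hyw : mulLetter Γ j y (a ++ ⟨i, g⟩ :: (t ++ ⟨j, h⟩ :: d)) =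
      a ++ ⟨i, g⟩ :: splice t (y * h) d := by
    rw [show a ++ ⟨i, g⟩ :: (t ++ ⟨j, h⟩ :: d) = (a ++ ⟨i, g⟩ :: t) ++ ⟨j, h⟩ :: d by simp,
      mulLetter_append_cons y hat, ← append_splice, ← cons_splice]
  rw [hyw, mulLetter_append_cons x ha, mulLetter_append_cons x ha, ← splice_append,
    mulLetter_append_cons y hj, splice_splice]

theorem mulLetter_comm_of_not_leads {i j : ι} (hij : Γ.Adj i j) (x : G i) (y : G j)
    {a b : Word G} (g : G i) (ha : ∀ l ∈ a, Γ.Adj i l.1)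
    (hj : ¬ Leads Γ j (a ++ ⟨i, g⟩ :: b).vertices) :
    mulLetter Γ i x (mulLetter Γ j y (a ++ ⟨i, g⟩ :: b)) =
      mulLetter Γ j y (mulLetter Γ i x (a ++ ⟨i, g⟩ :: b)) := by
  have hi : ∀ l ∈ splice [] y a, Γ.Adj i l.1 := fun l hl => by
    rcases mem_splice hl with hl | ⟨rfl, -⟩ | hl
    · simp at hl
    · exact hij
    · exact ha l hl
  rw [mulLetter_of_not_leads y hj, ← splice_append, mulLetter_append_cons x hi,
    mulLetter_append_cons x ha,
    mulLetter_of_not_leads y (fun h => hj (leads_of_leads_splice hij.symm _ g h)), splice_splice]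

theorem mulLetter_comm_of_not_leads_of_not_leads {i j : ι} (hij : Γ.Adj i j) (x : G i)
    (y : G j) {w : Word G} (hi : ¬ Leads Γ i w.vertices) (hj : ¬ Leads Γ j w.vertices) :
    EqvGen (Shuffle Γ) (mulLetter Γ i x (mulLetter Γ j y w))
      (mulLetter Γ j y (mulLetter Γ i x w)) := by
  have hi' : ¬ Leads Γ i (splice [] y w).vertices := fun h =>
    hi (by simpa [hij.ne', hij] using leads_of_leads_splice (a := []) hij y y h)
  have hj' : ¬ Leads Γ j (splice [] x w).vertices := fun h =>
    hj (by simpa [hij.ne, hij.symm] using leads_of_leads_splice (a := []) hij.symm x x h)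
  rw [mulLetter_of_not_leads y hj, mulLetter_of_not_leads x hi, mulLetter_of_not_leads x hi',
    mulLetter_of_not_leads y hj']
  by_cases hx : x = 1
  · simpa [hx] using EqvGen.refl _
  by_cases hy : y = 1
  · simpa [hy] using EqvGen.refl _
  simpa [splice_of_ne_one _ _ hx, splice_of_ne_one _ _ hy] using
    EqvGen.rel _ _ (Shuffle.swap [] w ⟨i, x⟩ ⟨j, y⟩ hij)

theorem mulLetter_comm {i j : ι} (hij : Γ.Adj i j) (x : G i) (y : G j) (w : Word G) :
    EqvGen (Shuffle Γ) (mulLetter Γ i x (mulLetter Γ j y w))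
      (mulLetter Γ j y (mulLetter Γ i x w)) := by
  by_cases hi : Leads Γ i w.vertices <;> by_cases hj : Leads Γ j w.vertices
  · obtain ⟨a, g, b, rfl, ha⟩ := exists_eq_append_cons_of_leads hi
    obtain ⟨c, h, d, hw, hc⟩ := exists_eq_append_cons_of_leads hj
    rcases List.append_cons_eq_append_cons hw with ⟨t, rfl, rfl⟩ | ⟨-, hg, -⟩ | ⟨t, rfl, rfl⟩
    · rw [mulLetter_comm_of_append_cons hij x y g h ha hc]
      exact .refl _
    · exact absurd (congrArg Sigma.fst hg) hij.ne
    · simp only [List.append_assoc, List.cons_append]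
      rw [mulLetter_comm_of_append_cons hij.symm y x h g hc ha]
      exact .refl _
  · obtain ⟨a, g, b, rfl, ha⟩ := exists_eq_append_cons_of_leads hi
    rw [mulLetter_comm_of_not_leads hij x y g ha hj]
    exact .refl _
  · obtain ⟨a, g, b, rfl, ha⟩ := exists_eq_append_cons_of_leads hj
    rw [mulLetter_comm_of_not_leads hij.symm y x g ha hi]
    exact .refl _
  · exact mulLetter_comm_of_not_leads_of_not_leads hij x y hi hj

end Word

end Letters

section Universal

variable {ι : Type*} {Γ : SimpleGraph ι} {G : ι → Type*} [∀ i, Group (G i)]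

theorem of_commute {i j : ι} (hij : Γ.Adj i j) (a : G i) (b : G j) :
    Commute (of Γ G i a) (of Γ G j b) := by
  rw [← commutatorElement_eq_one_iff_commute]
  exact (QuotientGroup.eq_one_iff _).2 (Subgroup.subset_normalClosure ⟨i, j, a, b, hij, rfl⟩)

variable (Γ) in
def lift {K : Type*} [Group K] (f : ∀ i, G i →* K)
    (hf : ∀ ⦃i j⦄, Γ.Adj i j → ∀ a b, Commute (f i a) (f j b)) : GraphProduct Γ G →* K :=
  QuotientGroup.lift _ (CoprodI.lift f) <| Subgroup.normalClosure_le_normal <| by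
    rintro _ ⟨i, j, a, b, hij, rfl⟩
    rw [SetLike.mem_coe, MonoidHom.mem_ker, map_commutatorElement, CoprodI.lift_of,
      CoprodI.lift_of, commutatorElement_eq_one_iff_commute]
    exact hf hij a b

@[simp] theorem lift_of {K : Type*} [Group K] (f : ∀ i, G i →* K)
    (hf : ∀ ⦃i j⦄, Γ.Adj i j → ∀ a b, Commute (f i a) (f j b)) (i : ι) (g : G i) :
    lift Γ f hf (of Γ G i g) = f i g :=
  CoprodI.lift_of f g

@[elab_as_elim]
theorem induction_left {motive : GraphProduct Γ G → Prop} (x : GraphProduct Γ G)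
    (one : motive 1) (mul : ∀ (i : ι) (g : G i) x, motive x → motive (of Γ G i g * x)) :
    motive x := by
  obtain ⟨y, rfl⟩ := QuotientGroup.mk'_surjective _ x
  induction y using CoprodI.induction_left with
  | one => exact one
  | mul g y ih => exact mul _ g _ ih

end Universal

section Products

variable {ι : Type*} {Γ : SimpleGraph ι} {G : ι → Type*} [∀ i, Group (G i)]

namespace Word

variable (Γ) in
def prod (w : Word G) : GraphProduct Γ G := (w.map fun l => of Γ G l.1 l.2).prod

@[simp] theorem prod_nil : prod Γ ([] : Word G) = 1 := rfl

@[simp] theorem prod_cons (l : (i : ι) × G i) (w : Word G) :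
    prod Γ (l :: w) = of Γ G l.1 l.2 * prod Γ w :=
  List.prod_cons

@[simp] theorem prod_append (a b : Word G) : prod Γ (a ++ b) = prod Γ a * prod Γ b := by
  simp [prod]

theorem prod_splice (a b : Word G) {i : ι} (z : G i) :
    prod Γ (splice a z b) = prod Γ a * of Γ G i z * prod Γ b := by
  unfold splice; split_ifs with hz <;> simp [hz, mul_assoc]

theorem commute_of_prod {i : ι} (g : G i) {a : Word G} (ha : ∀ l ∈ a, Γ.Adj i l.1) :
    Commute (of Γ G i g) (prod Γ a) := by
  induction a with
  | nil => exact Commute.one_right _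
  | cons l a ih =>
    simp only [List.mem_cons, forall_eq_or_imp] at ha
    exact (of_commute ha.1 g l.2).mul_right (ih ha.2)

theorem prod_mulLetter (i : ι) (x : G i) (w : Word G) :
    prod Γ (mulLetter Γ i x w) = of Γ G i x * prod Γ w := by
  by_cases h : Leads Γ i w.vertices
  · obtain ⟨a, g, b, rfl, ha⟩ := exists_eq_append_cons_of_leads h
    rw [mulLetter_append_cons x ha, prod_splice, prod_append, prod_cons, map_mul,
      ← mul_assoc, ← (commute_of_prod x ha).eq]
    simp only [mul_assoc]
  · rw [mulLetter_of_not_leads x h, prod_splice, prod_nil, one_mul]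

theorem reduced_nil : Reduced Γ ([] : Word G) := ⟨by simp, by simp⟩

end Word

theorem exists_reduced_prod_eq (x : GraphProduct Γ G) :
    ∃ w : Word G, w.Reduced Γ ∧ w.prod Γ = x := by
  induction x using induction_left with
  | one => exact ⟨[], Word.reduced_nil, rfl⟩
  | mul i g x ih =>
    obtain ⟨w, hw, rfl⟩ := ih
    exact ⟨Word.mulLetter Γ i g w, Word.reduced_mulLetter hw i g, Word.prod_mulLetter i g w⟩

end Products

section NormalForm

open Relation

variable {ι : Type*} (Γ : SimpleGraph ι) (G : ι → Type*) [∀ i, Group (G i)]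

abbrev ShuffleClass : Type _ :=
  Quotient ((EqvGen.setoid (Word.Shuffle Γ)).comap
    (Subtype.val : {w : Word G // w.Reduced Γ} → Word G))

variable {Γ G}

variable (Γ) in
noncomputable def letterAction (i : ι) : G i →* Function.End (ShuffleClass Γ G) where
  toFun x := Quotient.map (fun w => ⟨Word.mulLetter Γ i x w.1, Word.reduced_mulLetter w.2 i x⟩)
    fun _ _ h => Word.mulLetter_eqvGen h i x
  map_one' := funext fun c => Quotient.inductionOn c fun w =>
    congrArg _ (Subtype.ext (Word.mulLetter_one w.2 i))
  map_mul' x y := funext fun c => Quotient.inductionOn c fun w =>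
    (Quotient.sound (Word.mulLetter_mul w.2 i x y)).symm

theorem letterAction_commute {i j : ι} (hij : Γ.Adj i j) (x : G i) (y : G j) :
    Commute ((letterAction Γ i).toHomPerm x) ((letterAction Γ j).toHomPerm y) :=
  Equiv.ext fun c => Quotient.inductionOn c fun w =>
    Quotient.sound (Word.mulLetter_comm hij x y w.1)

variable (Γ G) in
noncomputable def wordAction : GraphProduct Γ G →* Equiv.Perm (ShuffleClass Γ G) :=
  lift Γ (fun i => (letterAction Γ i).toHomPerm) fun _ _ hij => letterAction_commute hij

theorem wordAction_prod {w : Word G} (hw : w.Reduced Γ) :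
    wordAction Γ G (w.prod Γ) ⟦⟨[], Word.reduced_nil⟩⟧ = ⟦⟨w, hw⟩⟧ := by
  induction w with
  | nil => rfl
  | cons l w ih =>
    obtain ⟨i, g⟩ := l
    rw [Word.prod_cons, map_mul, Equiv.Perm.mul_apply, ih hw.of_cons, wordAction, lift_of]
    refine congrArg _ (Subtype.ext (?_ : Word.mulLetter Γ i g w = ⟨i, g⟩ :: w))
    rw [Word.mulLetter_of_not_leads g hw.not_leads_of_cons,
      Word.splice_of_ne_one _ _ (hw.1 ⟨i, g⟩ (by simp)), List.nil_append]

theorem Word.prod_ne_one {w : Word G} (hw : w.Reduced Γ) (hne : w ≠ []) : w.prod Γ ≠ 1 := by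
  intro h
  have hw' := wordAction_prod hw
  rw [h, map_one, Equiv.Perm.one_apply] at hw'
  exact hne <| List.length_eq_zero_iff.1
    (Word.length_eq_of_eqvGen_shuffle (Quotient.exact hw')).symm

end NormalForm

section Map

variable {ι : Type*} (Γ : SimpleGraph ι) {G K : ι → Type*} [∀ i, Group (G i)] [∀ i, Group (K i)]

def map (f : ∀ i, G i →* K i) : GraphProduct Γ G →* GraphProduct Γ K :=
  lift Γ (fun i => (of Γ K i).comp (f i)) fun _ _ hij a b => of_commute hij (f _ a) (f _ b)

@[simp] theorem map_of (f : ∀ i, G i →* K i) (i : ι) (g : G i) :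
    map Γ f (of Γ G i g) = of Γ K i (f i g) :=
  lift_of _ _ i g

variable {Γ}

def Word.mapLetters (f : ∀ i, G i →* K i) (w : Word G) : Word K :=
  w.map fun l => ⟨l.1, f l.1 l.2⟩

theorem map_prod (f : ∀ i, G i →* K i) (w : Word G) :
    map Γ f (w.prod Γ) = (w.mapLetters f).prod Γ := by
  induction w with
  | nil => simp [Word.mapLetters]
  | cons l w ih => simp [Word.mapLetters, ih]

theorem Word.reduced_mapLetters {f : ∀ i, G i →* K i} (hf : ∀ i, Function.Injective (f i))
    {w : Word G} (hw : w.Reduced Γ) : (w.mapLetters f).Reduced Γ := by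
  refine ⟨?_, ?_⟩
  · simp only [mapLetters, List.mem_map]
    rintro _ ⟨l, hl, rfl⟩
    exact fun h => hw.1 l hl ((map_eq_one_iff _ (hf l.1)).1 h)
  · simpa [mapLetters, vertices, Function.comp_def] using hw.2

variable (Γ) in
theorem map_injective {f : ∀ i, G i →* K i} (hf : ∀ i, Function.Injective (f i)) :
    Function.Injective (map Γ f) := by
  rw [injective_iff_map_eq_one]
  intro x hx
  obtain ⟨w, hw, rfl⟩ := exists_reduced_prod_eq x
  rcases eq_or_ne w [] with rfl | hne
  · rfl
  · rw [map_prod] at hx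
    exact absurd hx (Word.prod_ne_one (Word.reduced_mapLetters hf hw) (by simpa [Word.mapLetters]))

end Map

end GraphProduct

theorem stmt13_general {ι : Type*} (Γ : SimpleGraph ι) (G : ι → Type*)
    [∀ i, Group (G i)] (H : ∀ i, Subgroup (G i)) :
    ∃ ψ : GraphProduct Γ (fun i => ↥(H i)) →* GraphProduct Γ G,
      Function.Injective ψ ∧
      ∀ (i : ι) (h : ↥(H i)),
        ψ (GraphProduct.of Γ (fun i => ↥(H i)) i h) = GraphProduct.of Γ G i (h : G i) :=
  ⟨GraphProduct.map Γ fun i => (H i).subtype,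
    GraphProduct.map_injective Γ fun i => (H i).subtype_injective,
    GraphProduct.map_of Γ _⟩

/-- Graph products of subgroups embed: if `Γ` is a finite graph with vertex groups `G i`
and `H i ≤ G i` are subgroups, then the graph product of the `H i` embeds into the graph
product of the `G i` via the natural map (sending the copy of `H i` into the copy of
`G i`). -/
theorem stmt13 {ι : Type*} [Fintype ι] (Γ : SimpleGraph ι) (G : ι → Type*)
    [∀ i, Group (G i)] (H : ∀ i, Subgroup (G i)) :
    ∃ ψ : GraphProduct Γ (fun i => ↥(H i)) →* GraphProduct Γ G,
      Function.Injective ψ ∧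
      ∀ (i : ι) (h : ↥(H i)),
        ψ (GraphProduct.of Γ (fun i => ↥(H i)) i h) = GraphProduct.of Γ G i (h : G i) :=
  stmt13_general Γ G H
end
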